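/- Let A be a C*-algebra and f, g positive central contractions in A. Then closure(fA) ∩ closure(gA) = closure(fgA). -/

import Mathlib

/-!
Put `uₙ = 1 - (1 - f) ^ n`, computed in the unitization. Each `uₙ` maps `A` into `f A`, has norm at
most `1`, and `‖f - uₙ f‖ ≤ 1 / (n + 1)`, so `uₙ a → a` for every `a` in the closure of `f A`. If
`a` also lies in the closure of `g A`, then, `g` being central, `uₙ a` lies in the closure of
`uₙ g A ⊆ f g A`, and hence so does the limit `a`.
-/

open Filter Topology Set

open Finset in
lemma mul_one_sub_pow_le_one_div_succ {x : ℝ} (hx : x ∈ Set.Icc 0 1) (n : ℕ) :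
    x * (1 - x) ^ n ≤ 1 / (n + 1) := by
  obtain ⟨hx0, hx1⟩ := hx
  have ht0 : 0 ≤ 1 - x := by linarith
  have ht1 : 1 - x ≤ 1 := by linarith
  rw [le_div_iff₀ (by positivity)]
  calc x * (1 - x) ^ n * (n + 1) = ∑ _k ∈ range (n + 1), x * (1 - x) ^ n := by
        simp only [sum_const, card_range, nsmul_eq_mul]; push_cast; ring
    _ ≤ ∑ k ∈ range (n + 1), x * (1 - x) ^ k :=
        sum_le_sum fun k hk => mul_le_mul_of_nonneg_left
          (pow_le_pow_of_le_one ht0 ht1 (Nat.lt_succ_iff.mp (mem_range.mp hk))) hx0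
    _ = 1 - (1 - x) ^ (n + 1) := by rw [← mul_sum, ← mul_neg_geom_sum, sub_sub_cancel]
    _ ≤ 1 := by linarith [pow_nonneg ht0 (n + 1)]

lemma tendsto_mul_of_mem_closure_range_mul {R ι : Type*} [NonUnitalSeminormedRing R]
    {l : Filter ι} {u : ι → R} {C : NNReal} (hu : ∀ i, ‖u i‖₊ ≤ C) {f a : R}
    (hf : Tendsto (fun i => u i * f) l (𝓝 f)) (ha : a ∈ closure (range (f * ·))) :
    Tendsto (fun i => u i * a) l (𝓝 a) := by
  have hlip : ∀ i, LipschitzWith C (u i * ·) := fun i =>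
    LipschitzWith.of_dist_le_mul fun x y => by
      rw [dist_eq_norm, dist_eq_norm, ← mul_sub]
      exact (norm_mul_le _ _).trans (by gcongr; exact_mod_cast hu i)
  have hclosed : IsClosed {x | Tendsto (fun i => u i * x) l (𝓝 (id x))} :=
    (LipschitzWith.uniformEquicontinuous _ C hlip).equicontinuous.isClosed_setOfPred_tendsto
      continuous_id
  refine closure_minimal (range_subset_iff.2 fun b => ?_) hclosed ha
  simpa only [mem_ofPred_eq, id, mul_assoc] using hf.mul_const b

section

variable {A : Type*} [NonUnitalCStarAlgebra A]

lemma quasispectrum_subset_Icc_of_nonneg_of_norm_le_one [PartialOrder A] [StarOrderedRing A]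
    {f : A} (hf₀ : 0 ≤ f) (hf₁ : ‖f‖ ≤ 1) : quasispectrum ℝ f ⊆ Icc 0 1 := fun x hx =>
  ⟨quasispectrum_nonneg_of_nonneg f hf₀ x hx,
    (le_abs_self x).trans <|
      (NonUnitalIsometricContinuousFunctionalCalculus.norm_quasispectrum_le f hx).trans hf₁⟩

noncomputable def approxUnitSeq (f : A) (n : ℕ) : A := cfcₙ (fun x : ℝ => 1 - (1 - x) ^ n) f

lemma approxUnitSeq_succ {f : A} (hf : IsSelfAdjoint f) (n : ℕ) :
    approxUnitSeq f (n + 1) = f + approxUnitSeq f n - f * approxUnitSeq f n :=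
  calc approxUnitSeq f (n + 1)
      = cfcₙ (fun x : ℝ => x + (1 - (1 - x) ^ n) - x * (1 - (1 - x) ^ n)) f :=
        cfcₙ_congr fun x _ => by ring
    _ = f + approxUnitSeq f n - f * approxUnitSeq f n := by
        rw [cfcₙ_sub _ _ f, cfcₙ_add _ _ f, cfcₙ_mul _ _ f, cfcₙ_id' ℝ f]; rfl

lemma approxUnitSeq_mul_mem_range {f : A} (hf : IsSelfAdjoint f) (n : ℕ) (y : A) :
    approxUnitSeq f n * y ∈ range (f * ·) := by
  induction n generalizing y with
  | zero => exact ⟨0, by simp [approxUnitSeq]⟩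
  | succ n ih =>
    obtain ⟨c, hc⟩ := ih y
    refine ⟨y + c - f * c, ?_⟩
    simp only [approxUnitSeq_succ hf, sub_mul, add_mul, mul_assoc, ← hc, mul_sub, mul_add]

lemma sub_approxUnitSeq_mul_self {f : A} (hf : IsSelfAdjoint f) (n : ℕ) :
    f - approxUnitSeq f n * f = cfcₙ (fun x : ℝ => x * (1 - x) ^ n) f :=
  calc f - approxUnitSeq f n * f
      = cfcₙ (fun x : ℝ => x - (1 - (1 - x) ^ n) * x) f := by
        rw [cfcₙ_sub _ _ f, cfcₙ_mul _ _ f, cfcₙ_id' ℝ f]; rfl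
    _ = cfcₙ (fun x : ℝ => x * (1 - x) ^ n) f := cfcₙ_congr fun x _ => by ring

variable [PartialOrder A] [StarOrderedRing A] {f : A}

lemma norm_approxUnitSeq_le (hf₀ : 0 ≤ f) (hf₁ : ‖f‖ ≤ 1) (n : ℕ) :
    ‖approxUnitSeq f n‖ ≤ 1 := by
  refine norm_cfcₙ_le fun x hx => ?_
  obtain ⟨hx0, hx1⟩ := quasispectrum_subset_Icc_of_nonneg_of_norm_le_one hf₀ hf₁ hx
  have hpow : (1 - x) ^ n ∈ Icc (0 : ℝ) 1 :=
    ⟨pow_nonneg (by linarith) n, pow_le_one₀ (by linarith) (by linarith)⟩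
  rw [Real.norm_eq_abs, abs_le]
  constructor <;> linarith [hpow.1, hpow.2]

lemma norm_sub_approxUnitSeq_mul_self_le (hf₀ : 0 ≤ f) (hf₁ : ‖f‖ ≤ 1) (n : ℕ) :
    ‖f - approxUnitSeq f n * f‖ ≤ 1 / (n + 1) := by
  rw [sub_approxUnitSeq_mul_self (.of_nonneg hf₀)]
  refine norm_cfcₙ_le fun x hx => ?_
  have hx' := quasispectrum_subset_Icc_of_nonneg_of_norm_le_one hf₀ hf₁ hx
  rw [Real.norm_of_nonneg (mul_nonneg hx'.1 (pow_nonneg (by linarith [hx'.2]) n))]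
  exact mul_one_sub_pow_le_one_div_succ hx' n

lemma tendsto_approxUnitSeq_mul_self (hf₀ : 0 ≤ f) (hf₁ : ‖f‖ ≤ 1) :
    Tendsto (fun n => approxUnitSeq f n * f) atTop (𝓝 f) := by
  rw [tendsto_iff_norm_sub_tendsto_zero]
  refine squeeze_zero (fun _ => norm_nonneg _) (fun n => ?_)
    tendsto_one_div_add_atTop_nhds_zero_nat
  rw [norm_sub_rev]
  exact norm_sub_approxUnitSeq_mul_self_le hf₀ hf₁ n

end

theorem closure_inter_closure_eq_closure_mul_of_central_positive_contractions_general
    {A : Type*} [NonUnitalCStarAlgebra A] [PartialOrder A] [StarOrderedRing A]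
    (f g : A) (hf_pos : 0 ≤ f)
    (hf_norm : ‖f‖ ≤ 1)
    (hg_central : ∀ a : A, g * a = a * g) :
    closure (Set.range (fun b : A => f * b)) ∩ closure (Set.range (fun b : A => g * b))
      = closure (Set.range (fun b : A => f * g * b)) := by
  refine Subset.antisymm (fun a ⟨haf, hag⟩ => ?_) (subset_inter ?_ ?_)
  · have hu_mem : ∀ n, approxUnitSeq f n * a ∈ closure (range (f * g * ·)) := fun n =>
      map_mem_closure (continuous_const_mul _) hag <| by
        rintro _ ⟨c, rfl⟩
        obtain ⟨d, hd⟩ := approxUnitSeq_mul_mem_range (.of_nonneg hf_pos) n c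
        refine ⟨d, ?_⟩
        beta_reduce at hd ⊢
        rw [← hg_central f, mul_assoc, hd, ← mul_assoc, hg_central, mul_assoc]
    exact isClosed_closure.mem_of_tendsto
      (tendsto_mul_of_mem_closure_range_mul (C := 1)
        (fun n => by exact_mod_cast norm_approxUnitSeq_le hf_pos hf_norm n)
        (tendsto_approxUnitSeq_mul_self hf_pos hf_norm) haf)
      (Eventually.of_forall hu_mem)
  · exact closure_mono <| range_subset_iff.2 fun b => ⟨g * b, (mul_assoc f g b).symm⟩
  · refine closure_mono <| range_subset_iff.2 fun b => ⟨f * b, ?_⟩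
    beta_reduce
    rw [← mul_assoc, hg_central]

/-- for positive central contractions `f, g` in a C*-algebra,
`closure (fA) ∩ closure (gA) = closure (fgA)`. -/
theorem closure_inter_closure_eq_closure_mul_of_central_positive_contractions
    {A : Type*} [NonUnitalCStarAlgebra A] [PartialOrder A] [StarOrderedRing A]
    (f g : A) (hf_pos : 0 ≤ f) (hg_pos : 0 ≤ g)
    (hf_norm : ‖f‖ ≤ 1) (hg_norm : ‖g‖ ≤ 1)
    (hf_central : ∀ a : A, f * a = a * f) (hg_central : ∀ a : A, g * a = a * g) :
    closure (Set.range (fun b : A => f * b)) ∩ closure (Set.range (fun b : A => g * b))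
      = closure (Set.range (fun b : A => f * g * b)) :=
  closure_inter_closure_eq_closure_mul_of_central_positive_contractions_general f g hf_pos hf_norm
    hg_central
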